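/- arXiv:2502.09817 — 2 statements merged into one kernel-verified Lean document; each statement's English description precedes it below -/
import Mathlib

section
/- For any secure aggregation scheme for (F, G) and any user index u ∈ {1, …, K} such that the u-th column of F is nonzero, the message entropy satisfies H[X_u] ≥ L · log q; consequently, if X_u takes values in 𝔽^{L_X} then L_X ≥ L. -/
/-!
Shannon entropy machinery for finitely-supported random variables on a finite
probability space, and the definition of a vector-linear secure aggregation
scheme (Yuan–Sun, "Vector Linear Secure Aggregation").
-/

open scoped BigOperators Classical

namespace SecAgg

noncomputable section

variable {Ω : Type*} [Fintype Ω]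

/-- Probability that the random variable `X` takes the value `a`, under the
probability mass function `p` on the finite sample space `Ω`. -/
def pr {α : Type*} (p : Ω → ℝ) (X : Ω → α) (a : α) : ℝ :=
  ∑ ω, if X ω = a then p ω else 0

/-- Shannon entropy (natural-log units) of a random variable `X` on a finite
probability space with mass function `p`. -/
def H {α : Type*} (p : Ω → ℝ) (X : Ω → α) : ℝ :=
  ∑ a ∈ Finset.univ.image X, Real.negMulLog (pr p X a)

/-- Conditional Shannon entropy `H[X | Y] = H[(X,Y)] - H[Y]`. -/
def Hc {α β : Type*} (p : Ω → ℝ) (X : Ω → α) (Y : Ω → β) : ℝ :=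
  H p (fun ω => (X ω, Y ω)) - H p Y

/-- Mutual information `I[X : Y] = H[X] + H[Y] - H[(X,Y)]`. -/
def MI {α β : Type*} (p : Ω → ℝ) (X : Ω → α) (Y : Ω → β) : ℝ :=
  H p X + H p Y - H p (fun ω => (X ω, Y ω))

/-- Conditional mutual information
`I[X : Y | Z] = H[(X,Z)] + H[(Y,Z)] - H[(X,Y,Z)] - H[Z]`. -/
def CMI {α β γ : Type*} (p : Ω → ℝ) (X : Ω → α) (Y : Ω → β) (Z : Ω → γ) : ℝ :=
  H p (fun ω => (X ω, Z ω)) + H p (fun ω => (Y ω, Z ω))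
    - H p (fun ω => (X ω, Y ω, Z ω)) - H p Z

/-- A secure aggregation scheme for the pair of linear maps `(F, G)`:
`K` users, inputs of length `L` over the finite field `𝔽`; the server must
learn `F * W` and nothing more about `G * W`.  `κ k` is the alphabet of
user `k`'s key, `σ` the alphabet of the source key, `χ k` the alphabet of
user `k`'s message. -/
structure Scheme (𝔽 : Type) [Field 𝔽] [Fintype 𝔽] (L : ℕ) {K M N : ℕ}
    (F : Matrix (Fin M) (Fin K) 𝔽) (G : Matrix (Fin N) (Fin K) 𝔽)
    (Ω : Type) [Fintype Ω] (κ : Fin K → Type) (σ : Type) (χ : Fin K → Type) where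
  /-- probability mass function on the sample space -/
  p : Ω → ℝ
  p_nonneg : ∀ ω, 0 ≤ p ω
  p_sum_one : ∑ ω, p ω = 1
  /-- the input, a `K × L` matrix of field elements (row `k` is user `k`'s input) -/
  W : Ω → Matrix (Fin K) (Fin L) 𝔽
  /-- user `k`'s key -/
  Z : ∀ k : Fin K, Ω → κ k
  /-- the source key -/
  Zsrc : Ω → σ
  /-- user `k`'s message -/
  X : ∀ k : Fin K, Ω → χ k
  /-- the input is uniformly distributed -/
  W_unif : ∀ w : Matrix (Fin K) (Fin L) 𝔽,
    pr p W w = (Fintype.card (Matrix (Fin K) (Fin L) 𝔽) : ℝ)⁻¹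
  /-- the input is independent of all keys (including the source key) -/
  indep : ∀ (w : Matrix (Fin K) (Fin L) 𝔽) (z : (∀ k, κ k) × σ),
    pr p (fun ω => (W ω, ((fun k => Z k ω), Zsrc ω))) (w, z)
      = pr p W w * pr p (fun ω => ((fun k => Z k ω), Zsrc ω)) z
  /-- each key is a deterministic function of the source key -/
  Z_det : ∀ k : Fin K, ∃ f : σ → κ k, ∀ ω, Z k ω = f (Zsrc ω)
  /-- each message is a deterministic function of (own input row, own key) -/
  X_det : ∀ k : Fin K, ∃ f : (Fin L → 𝔽) → κ k → χ k, ∀ ω, X k ω = f (W ω k) (Z k ω)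
  /-- correctness: `F ⬝ W` is determined by the messages -/
  correct : Hc p (fun ω => F * W ω) (fun ω k => X k ω) = 0
  /-- security: the messages reveal nothing about `G ⬝ W` beyond `F ⬝ W` -/
  secure : CMI p (fun ω => G * W ω) (fun ω k => X k ω) (fun ω => F * W ω) = 0

end

end SecAgg
namespace SecAgg

section Lemmas

open Finset Real

variable {Ω : Type*} [Fintype Ω] {α β γ : Type*} {p : Ω → ℝ}

lemma pr_nonneg (hp : ∀ ω, 0 ≤ p ω) (X : Ω → α) (a : α) : 0 ≤ pr p X a := by
  unfold pr
  exact Finset.sum_nonneg fun ω _ => by by_cases h : X ω = a <;> simp [h, hp ω]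

lemma single_le_pr (hp : ∀ ω, 0 ≤ p ω) {X : Ω → α} {ω : Ω} {a : α} (h : X ω = a) :
    p ω ≤ pr p X a := by
  unfold pr
  have := Finset.single_le_sum (f := fun ω => if X ω = a then p ω else 0)
    (fun ω' _ => by by_cases h' : X ω' = a <;> simp [h', hp ω']) (Finset.mem_univ ω)
  simpa [h] using this

lemma pr_pos_elim (hp : ∀ ω, 0 ≤ p ω) {X : Ω → α} {a : α} (h : 0 < pr p X a) :
    ∃ ω, 0 < p ω ∧ X ω = a := by
  by_contra hc
  push_neg at hc
  have : pr p X a = 0 := by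
    unfold pr
    refine Finset.sum_eq_zero fun ω _ => ?_
    by_cases hXa : X ω = a
    · simp only [hXa, if_true]
      exact le_antisymm (not_lt.mp fun hlt => hc ω hlt hXa) (hp ω)
    · simp [hXa]
  simp [this] at h

lemma pr_eq_zero {X : Ω → α} {a : α} (h : ∀ ω, X ω ≠ a) : pr p X a = 0 :=
  Finset.sum_eq_zero fun ω _ => by simp [h ω]

lemma pr_eq_zero_of_not_mem {X : Ω → α} {a : α} (h : a ∉ Finset.univ.image X) :
    pr p X a = 0 :=
  pr_eq_zero fun ω hXa => h (hXa ▸ Finset.mem_image_of_mem X (Finset.mem_univ ω))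

lemma H_eq_sum_subset {X : Ω → α} {s : Finset α} (h : ∀ ω, X ω ∈ s) :
    H p X = ∑ a ∈ s, Real.negMulLog (pr p X a) := by
  unfold H
  refine Finset.sum_subset (fun a ha => ?_) fun a _ ha => ?_
  · obtain ⟨ω₀, -, rfl⟩ := Finset.mem_image.mp ha; exact h ω₀
  · rw [pr_eq_zero_of_not_mem ha, Real.negMulLog_zero]

lemma sum_pr (X : Ω → α) : ∑ a ∈ Finset.univ.image X, pr p X a = ∑ ω, p ω := by
  unfold pr
  rw [Finset.sum_comm]
  refine Finset.sum_congr rfl fun ω _ => ?_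
  rw [Finset.sum_ite_eq (Finset.univ.image X) (X ω) (fun _ => p ω)]
  simp [Finset.mem_image_of_mem]

lemma pr_marginal {X : Ω → α} {Y : Ω → β} {s : Finset α}
    (h : ∀ ω, X ω ∈ s) (b : β) :
    pr p Y b = ∑ a ∈ s, pr p (fun ω => (X ω, Y ω)) (a, b) := by
  unfold pr
  rw [Finset.sum_comm]
  refine Finset.sum_congr rfl fun ω _ => ?_
  by_cases hY : Y ω = b
  · have : ∀ a, ((X ω, Y ω) = (a, b)) = (X ω = a) := fun a => by
      simp [Prod.ext_iff, hY]
    simp only [this]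
    rw [Finset.sum_ite_eq s (X ω) (fun _ => p ω)]
    simp [h ω, hY]
  · simp [Prod.ext_iff, hY]

lemma pr_comp_subset {Y : Ω → β} {s : Finset β} (h : ∀ ω, Y ω ∈ s)
    (g : β → γ) (a : γ) :
    pr p (fun ω => g (Y ω)) a = ∑ y ∈ s, if g y = a then pr p Y y else 0 := by
  have key : ∀ y, (if g y = a then pr p Y y else 0)
      = ∑ ω, if Y ω = y ∧ g y = a then p ω else 0 := by
    intro y
    by_cases hg : g y = a
    · simp only [hg, if_true]
      unfold pr; exact Finset.sum_congr rfl fun ω _ => by simp [hg]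
    · simp only [hg, if_false]
      exact (Finset.sum_eq_zero fun ω _ => by simp [hg]).symm
  simp only [key]
  rw [Finset.sum_comm]
  unfold pr
  refine Finset.sum_congr rfl fun ω _ => ?_
  have : ∀ y, (if Y ω = y ∧ g y = a then p ω else 0)
      = if Y ω = y then (if g y = a then p ω else 0) else 0 := by
    intro y; by_cases hy : Y ω = y <;> simp [hy]
  simp only [this]
  rw [Finset.sum_ite_eq s (Y ω) (fun y => if g y = a then p ω else 0)]
  simp [h ω]

lemma le_H_of_bound (hp : ∀ ω, 0 ≤ p ω) (h1 : ∑ ω, p ω = 1) {X : Ω → α} {c : ℝ}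
    (hc : 0 < c) (hb : ∀ a, pr p X a ≤ c⁻¹) : Real.log c ≤ H p X := by
  have hsum : ∑ a ∈ Finset.univ.image X, pr p X a = 1 := by rw [sum_pr X, h1]
  have hterm : ∀ a ∈ Finset.univ.image X,
      pr p X a * Real.log c ≤ Real.negMulLog (pr p X a) := by
    intro a _
    rcases eq_or_lt_of_le (pr_nonneg hp X a) with h0 | h0
    · rw [← h0]; simp
    · have hle := hb a
      have hlogle : Real.log (pr p X a) ≤ - Real.log c := by
        rw [← Real.log_inv]
        exact Real.log_le_log h0 hle
      rw [Real.negMulLog]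
      nlinarith
  calc Real.log c = (∑ a ∈ Finset.univ.image X, pr p X a) * Real.log c := by
        rw [hsum, one_mul]
    _ = ∑ a ∈ Finset.univ.image X, pr p X a * Real.log c := Finset.sum_mul _ _ _
    _ ≤ ∑ a ∈ Finset.univ.image X, Real.negMulLog (pr p X a) := Finset.sum_le_sum hterm
    _ = H p X := rfl

lemma pr_congr_event {X : Ω → α} {Y : Ω → β} {a : α} {b : β}
    (h : ∀ ω, X ω = a ↔ Y ω = b) : pr p X a = pr p Y b := by
  unfold pr
  refine Finset.sum_congr rfl fun ω _ => ?_
  by_cases hx : X ω = a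
  · rw [if_pos hx, if_pos ((h ω).mp hx)]
  · rw [if_neg hx, if_neg fun hy => hx ((h ω).mpr hy)]

lemma det_of_Hc_zero (hp : ∀ ω, 0 ≤ p ω)
    {X : Ω → α} {Y : Ω → β} (h : Hc p X Y = 0)
    {ω ω' : Ω} (hω : 0 < p ω) (hω' : 0 < p ω') (hY : Y ω = Y ω') : X ω = X ω' := by
  by_contra hne
  set s := Finset.univ.image X with hs
  set t := Finset.univ.image Y with ht
  set q : α × β → ℝ := pr p (fun ω => (X ω, Y ω)) with hq
  have hmarg : ∀ b, pr p Y b = ∑ a ∈ s, q (a, b) :=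
    fun b => pr_marginal (fun ω => Finset.mem_image_of_mem X (Finset.mem_univ ω)) b
  have hqnn : ∀ ab, 0 ≤ q ab := fun ab => pr_nonneg hp _ ab
  have hHpair : H p (fun ω => (X ω, Y ω)) = ∑ ab ∈ s ×ˢ t, Real.negMulLog (q ab) := by
    refine H_eq_sum_subset fun ω₀ => Finset.mem_product.mpr
      ⟨Finset.mem_image_of_mem _ (Finset.mem_univ ω₀),
       Finset.mem_image_of_mem _ (Finset.mem_univ ω₀)⟩
  have hf : Hc p X Y = ∑ b ∈ t, ∑ a ∈ s,
      (q (a, b) * Real.log (pr p Y b) - q (a, b) * Real.log (q (a, b))) := by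
    unfold Hc
    rw [hHpair, Finset.sum_product_right]
    unfold H
    rw [← ht, ← Finset.sum_sub_distrib]
    refine Finset.sum_congr rfl fun b _ => ?_
    have inner : ∑ a ∈ s, (q (a, b) * Real.log (pr p Y b) - q (a, b) * Real.log (q (a, b)))
        = (∑ a ∈ s, q (a, b)) * Real.log (pr p Y b)
          + ∑ a ∈ s, Real.negMulLog (q (a, b)) := by
      rw [Finset.sum_sub_distrib, ← Finset.sum_mul]
      simp only [Real.negMulLog, neg_mul]
      rw [Finset.sum_neg_distrib]
      ring
    rw [inner, ← hmarg b]
    simp only [Real.negMulLog, neg_mul]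
    ring
  have hterm_nn : ∀ b ∈ t, ∀ a ∈ s,
      0 ≤ q (a, b) * Real.log (pr p Y b) - q (a, b) * Real.log (q (a, b)) := by
    intro b hb a ha
    rcases eq_or_lt_of_le (hqnn (a, b)) with h0 | h0
    · simp [← h0]
    · have hle : q (a, b) ≤ pr p Y b := by
        rw [hmarg b]
        exact Finset.single_le_sum (fun a' _ => hqnn (a', b)) ha
      have := Real.log_le_log h0 hle
      nlinarith
  have hzero : ∀ b ∈ t, ∀ a ∈ s,
      q (a, b) * Real.log (pr p Y b) - q (a, b) * Real.log (q (a, b)) = 0 := by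
    have hsum0 : ∑ b ∈ t, ∑ a ∈ s,
        (q (a, b) * Real.log (pr p Y b) - q (a, b) * Real.log (q (a, b))) = 0 := by
      rw [← hf]; exact h
    intro b hb a ha
    have h1 := (Finset.sum_eq_zero_iff_of_nonneg
      (fun b hb => Finset.sum_nonneg (fun a ha => hterm_nn b hb a ha))).mp hsum0 b hb
    exact (Finset.sum_eq_zero_iff_of_nonneg (fun a ha => hterm_nn b hb a ha)).mp h1 a ha
  -- now derive contradiction
  set a₁ := X ω with ha₁
  set a₂ := X ω' with ha₂
  set b := Y ω with hb
  have ha₁s : a₁ ∈ s := Finset.mem_image_of_mem X (Finset.mem_univ ω)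
  have ha₂s : a₂ ∈ s := Finset.mem_image_of_mem X (Finset.mem_univ ω')
  have hbt : b ∈ t := Finset.mem_image_of_mem Y (Finset.mem_univ ω)
  have hq1 : 0 < q (a₁, b) := lt_of_lt_of_le hω (single_le_pr hp (by simp [ha₁, hb]))
  have hq2 : 0 < q (a₂, b) := lt_of_lt_of_le hω' (single_le_pr hp (show (X ω', Y ω') = (a₂, b) by rw [← ha₂, ← hY]))
  have hlt : q (a₁, b) < pr p Y b := by
    rw [hmarg b]
    have hsub : ({a₁, a₂} : Finset α) ⊆ s := by
      intro x hx; rcases Finset.mem_insert.mp hx with rfl | hx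
      · exact ha₁s
      · rw [Finset.mem_singleton.mp hx]; exact ha₂s
    have h2 : q (a₁, b) + q (a₂, b) ≤ ∑ a ∈ s, q (a, b) := by
      have := Finset.sum_le_sum_of_subset_of_nonneg hsub
        (fun a _ _ => hqnn (a, b))
      rwa [Finset.sum_pair hne] at this
    linarith
  have := hzero b hbt a₁ ha₁s
  have hloglt := Real.log_lt_log hq1 hlt
  nlinarith

end Lemmas

/-- For any secure aggregation scheme for `(F, G)` (with message alphabets
`𝔽^{L_X k}`) and any user `u` whose column of `F` is nonzero, we have
`H[X_u] ≥ L · log q`; consequently `L_X u ≥ L`. -/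
theorem message_entropy_lower_bound
    {𝔽 : Type} [Field 𝔽] [Fintype 𝔽] {K M N : ℕ} {L : ℕ}
    (hK : 1 ≤ K) (hL : 1 ≤ L)
    (F : Matrix (Fin M) (Fin K) 𝔽) (G : Matrix (Fin N) (Fin K) 𝔽)
    (hF : F.rank = M) (hG : G.rank = N)
    (Ω : Type) [Fintype Ω] (κ : Fin K → Type) (σ : Type) (LX : Fin K → ℕ)
    (S : Scheme 𝔽 L F G Ω κ σ (fun k => Fin (LX k) → 𝔽))
    (u : Fin K) (hu : ∃ i : Fin M, F i u ≠ 0) :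
    (L : ℝ) * Real.log (Fintype.card 𝔽) ≤ H S.p (S.X u) ∧ L ≤ LX u := by
  classical
  obtain ⟨fz, hfz⟩ : ∃ f : ∀ k, σ → κ k, ∀ k ω, S.Z k ω = f k (S.Zsrc ω) := by
    choose f hf using S.Z_det; exact ⟨f, hf⟩
  obtain ⟨fx, hfx⟩ : ∃ f : ∀ k, (Fin L → 𝔽) → κ k → (Fin (LX k) → 𝔽),
      ∀ k ω, S.X k ω = f k (S.W ω k) (S.Z k ω) := by
    choose f hf using S.X_det; exact ⟨f, hf⟩
  have hp : ∀ ω, 0 ≤ S.p ω := S.p_nonneg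
  -- joint distribution of (W, Zsrc)
  have hWZ : ∀ (w : Matrix (Fin K) (Fin L) 𝔽) (z : σ),
      pr S.p (fun ω => (S.W ω, S.Zsrc ω)) (w, z)
      = (Fintype.card (Matrix (Fin K) (Fin L) 𝔽) : ℝ)⁻¹ * pr S.p S.Zsrc z := by
    intro w z
    have e1 : pr S.p (fun ω => (S.W ω, S.Zsrc ω)) (w, z)
        = pr S.p (fun ω => (S.W ω, ((fun k => S.Z k ω), S.Zsrc ω)))
            (w, ((fun k => fz k z), z)) := by
      refine pr_congr_event fun ω => ?_
      simp only [Prod.mk.injEq]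
      constructor
      · rintro ⟨h1, h2⟩
        exact ⟨h1, funext fun k => by rw [hfz k ω, h2], h2⟩
      · rintro ⟨h1, -, h2⟩
        exact ⟨h1, h2⟩
    have e2 : pr S.p (fun ω => ((fun k => S.Z k ω), S.Zsrc ω)) ((fun k => fz k z), z)
        = pr S.p S.Zsrc z := by
      refine pr_congr_event fun ω => ?_
      simp only [Prod.mk.injEq]
      constructor
      · rintro ⟨-, h2⟩; exact h2
      · intro h2; exact ⟨funext fun k => by rw [hfz k ω, h2], h2⟩
    rw [e1, S.indep, e2, S.W_unif]
  -- cardinal bookkeeping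
  have hqLpos : 0 < Fintype.card (Fin L → 𝔽) := Fintype.card_pos
  have hc_const : ∀ r : Fin L → 𝔽,
      (Finset.univ.filter (fun w : Matrix (Fin K) (Fin L) 𝔽 => w u = r)).card
      = (Finset.univ.filter (fun w : Matrix (Fin K) (Fin L) 𝔽 => w u = 0)).card := by
    intro r
    refine Finset.card_equiv (Equiv.subRight (fun i j => if i = u then r j else 0 :
      Matrix (Fin K) (Fin L) 𝔽)) fun w => ?_
    simp only [Finset.mem_filter, Finset.mem_univ, true_and, Equiv.subRight_apply]
    constructor
    · intro hw; funext j
      change w u j - (if u = u then r j else 0) = 0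
      simp [Matrix.sub_apply, hw]
    · intro hw; funext j
      have := congrFun hw j
      change w u j - (if u = u then r j else 0) = 0 at this
      exact sub_eq_zero.mp (by simpa [Matrix.sub_apply] using this)
  have hQM : Fintype.card (Matrix (Fin K) (Fin L) 𝔽)
      = Fintype.card (Fin L → 𝔽)
        * (Finset.univ.filter (fun w : Matrix (Fin K) (Fin L) 𝔽 => w u = 0)).card := by
    have := Finset.card_eq_sum_card_fiberwise
      (f := fun w : Matrix (Fin K) (Fin L) 𝔽 => w u) (t := Finset.univ)
      (s := Finset.univ) (fun x _ => Finset.mem_univ _)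
    rw [← Finset.card_univ, this]
    rw [Finset.sum_congr rfl fun r _ => hc_const r, Finset.sum_const,
      Finset.card_univ, smul_eq_mul]
  have hcpos : 0 < (Finset.univ.filter
      (fun w : Matrix (Fin K) (Fin L) 𝔽 => w u = 0)).card := by
    refine Finset.card_pos.mpr ⟨0, ?_⟩
    simp only [Finset.mem_filter, Finset.mem_univ, true_and]
    rfl
  -- row marginal
  have hrow : ∀ (r : Fin L → 𝔽) (z : σ),
      pr S.p (fun ω => (S.W ω u, S.Zsrc ω)) (r, z)
      = (Fintype.card (Fin L → 𝔽) : ℝ)⁻¹ * pr S.p S.Zsrc z := by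
    intro r z
    have himg : ∀ ω, ((fun ω => (S.W ω, S.Zsrc ω)) ω)
        ∈ ((Finset.univ : Finset (Matrix (Fin K) (Fin L) 𝔽)) ×ˢ Finset.univ.image S.Zsrc) :=
      fun ω => Finset.mem_product.mpr ⟨Finset.mem_univ _,
        Finset.mem_image_of_mem _ (Finset.mem_univ ω)⟩
    refine Eq.trans (pr_comp_subset (p := S.p) himg
      (fun wz : Matrix (Fin K) (Fin L) 𝔽 × σ => (wz.1 u, wz.2)) (r, z)) ?_
    rw [Finset.sum_product]
    trans (∑ w : Matrix (Fin K) (Fin L) 𝔽, if w u = r then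
        (if z ∈ Finset.univ.image S.Zsrc
          then (Fintype.card (Matrix (Fin K) (Fin L) 𝔽) : ℝ)⁻¹ * pr S.p S.Zsrc z else 0) else 0)
    · refine Finset.sum_congr rfl fun w _ => ?_
      by_cases hw : w u = r
      · rw [if_pos hw]
        refine Eq.trans (Finset.sum_congr rfl fun z' _ => ?_)
          (Finset.sum_ite_eq' (Finset.univ.image S.Zsrc) z
            (fun z' => (Fintype.card (Matrix (Fin K) (Fin L) 𝔽) : ℝ)⁻¹ * pr S.p S.Zsrc z'))
        by_cases hz' : z' = z
        · rw [if_pos (show (((w, z') : Matrix (Fin K) (Fin L) 𝔽 × σ).1 u, (w, z').2) = (r, z)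
            by simp [hw, hz']), if_pos hz', hz', hWZ]
        · rw [if_neg (by simp [Prod.mk.injEq, hz']), if_neg hz']
      · rw [if_neg hw]
        exact Finset.sum_eq_zero fun z' _ => if_neg (by simp [Prod.mk.injEq, hw])
    · by_cases hz : z ∈ Finset.univ.image S.Zsrc
      · simp only [hz, if_true]
        rw [← Finset.sum_filter, Finset.sum_const, nsmul_eq_mul]
        rw [hc_const r]
        have hcast : (Fintype.card (Matrix (Fin K) (Fin L) 𝔽) : ℝ)
            = (Fintype.card (Fin L → 𝔽) : ℝ)
              * ((Finset.univ.filter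
                  (fun w : Matrix (Fin K) (Fin L) 𝔽 => w u = 0)).card : ℝ) := by
          rw [hQM]; push_cast; ring
        rw [hcast]
        have h1 : ((Finset.univ.filter
            (fun w : Matrix (Fin K) (Fin L) 𝔽 => w u = 0)).card : ℝ) ≠ 0 :=
          Nat.cast_ne_zero.mpr hcpos.ne'
        have h2 : (Fintype.card (Fin L → 𝔽) : ℝ) ≠ 0 := Nat.cast_ne_zero.mpr hqLpos.ne'
        field_simp
      · simp only [hz, if_false]
        rw [pr_eq_zero_of_not_mem hz]
        simp
  -- injectivity
  have hinj : ∀ z : σ, 0 < pr S.p S.Zsrc z →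
      Function.Injective (fun r : Fin L → 𝔽 => fx u r (fz u z)) := by
    intro z hz r r' he
    by_contra hne
    set wm : (Fin L → 𝔽) → Matrix (Fin K) (Fin L) 𝔽 :=
      fun r0 => fun i j => if i = u then r0 j else 0 with hwm
    have hpos : ∀ r0 : Fin L → 𝔽,
        0 < pr S.p (fun ω => (S.W ω, S.Zsrc ω)) (wm r0, z) := by
      intro r0
      rw [hWZ]
      have hQpos : (0:ℝ) < (Fintype.card (Matrix (Fin K) (Fin L) 𝔽) : ℝ) :=
        Nat.cast_pos.mpr Fintype.card_pos
      exact mul_pos (inv_pos.mpr hQpos) hz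
    obtain ⟨ω, hpω, hWω⟩ := pr_pos_elim hp (hpos r)
    obtain ⟨ω', hpω', hWω'⟩ := pr_pos_elim hp (hpos r')
    have hW1 : S.W ω = wm r := congrArg Prod.fst hWω
    have hz1 : S.Zsrc ω = z := congrArg Prod.snd hWω
    have hW2 : S.W ω' = wm r' := congrArg Prod.fst hWω'
    have hz2 : S.Zsrc ω' = z := congrArg Prod.snd hWω'
    have hXeq : (fun k => S.X k ω) = (fun k => S.X k ω') := by
      funext k
      rw [hfx k ω, hfx k ω', hfz k ω, hfz k ω', hz1, hz2, hW1, hW2]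
      by_cases hk : k = u
      · subst hk
        have h1 : wm r k = r := by funext j; simp [hwm]
        have h2 : wm r' k = r' := by funext j; simp [hwm]
        rw [h1, h2]
        exact he
      · have h1 : wm r k = (0 : Fin L → 𝔽) := by funext j; simp [hwm, hk]
        have h2 : wm r' k = (0 : Fin L → 𝔽) := by funext j; simp [hwm, hk]
        rw [h1, h2]
    have hFW : F * S.W ω = F * S.W ω' := det_of_Hc_zero hp S.correct hpω hpω' hXeq
    rw [hW1, hW2] at hFW
    obtain ⟨i, hFiu⟩ := hu
    obtain ⟨j, hj⟩ : ∃ j, r j ≠ r' j := by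
      by_contra hcon; push_neg at hcon; exact hne (funext hcon)
    have hent := congrFun (congrFun hFW i) j
    rw [Matrix.mul_apply, Matrix.mul_apply] at hent
    have e1 : ∀ r0 : Fin L → 𝔽, ∑ k, F i k * wm r0 k j = F i u * r0 j := by
      intro r0
      have hterm : ∀ k, F i k * wm r0 k j = if k = u then F i k * r0 j else 0 := by
        intro k; by_cases hk : k = u <;> simp [hwm, hk]
      rw [Finset.sum_congr rfl fun k _ => hterm k]
      rw [Finset.sum_ite_eq' Finset.univ u (fun k => F i k * r0 j)]
      simp
    rw [e1 r, e1 r'] at hent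
    exact hj (mul_left_cancel₀ hFiu hent)
  -- per-value bound on message distribution
  have hXu : ∀ a : Fin (LX u) → 𝔽,
      pr S.p (S.X u) a ≤ (Fintype.card (Fin L → 𝔽) : ℝ)⁻¹ := by
    intro a
    have hXfun : S.X u = fun ω => (fun rz : (Fin L → 𝔽) × σ => fx u rz.1 (fz u rz.2))
        ((fun ω => (S.W ω u, S.Zsrc ω)) ω) := by
      funext ω; rw [hfx u ω, hfz u ω]
    rw [hXfun]
    have himg : ∀ ω, ((fun ω => (S.W ω u, S.Zsrc ω)) ω)
        ∈ ((Finset.univ : Finset (Fin L → 𝔽)) ×ˢ Finset.univ.image S.Zsrc) :=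
      fun ω => Finset.mem_product.mpr ⟨Finset.mem_univ _,
        Finset.mem_image_of_mem _ (Finset.mem_univ ω)⟩
    refine le_trans (le_of_eq (pr_comp_subset (p := S.p) himg
      (fun rz : (Fin L → 𝔽) × σ => fx u rz.1 (fz u rz.2)) a)) ?_
    rw [Finset.sum_product_right]
    have keyz : ∀ z ∈ Finset.univ.image S.Zsrc,
        (∑ r : Fin L → 𝔽,
          @ite ℝ ((fun rz : (Fin L → 𝔽) × σ => fx u rz.1 (fz u rz.2)) (r, z) = a)
            (Classical.propDecidable _)
            (pr S.p (fun ω => (S.W ω u, S.Zsrc ω)) (r, z)) 0)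
        ≤ (Fintype.card (Fin L → 𝔽) : ℝ)⁻¹ * pr S.p S.Zsrc z := by
      intro z _
      rcases eq_or_lt_of_le (pr_nonneg hp S.Zsrc z) with h0 | h0
      · refine le_of_eq ?_
        rw [← h0, mul_zero]
        refine Finset.sum_eq_zero fun r _ => ?_
        by_cases hcond : fx u r (fz u z) = a
        · rw [if_pos hcond, hrow, ← h0, mul_zero]
        · rw [if_neg hcond]
      · have hinjz := hinj z h0
        have step1 : (∑ r : Fin L → 𝔽,
            @ite ℝ ((fun rz : (Fin L → 𝔽) × σ => fx u rz.1 (fz u rz.2)) (r, z) = a)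
              (Classical.propDecidable _)
              (pr S.p (fun ω => (S.W ω u, S.Zsrc ω)) (r, z)) 0)
            = ∑ r : Fin L → 𝔽, if fx u r (fz u z) = a
              then (Fintype.card (Fin L → 𝔽) : ℝ)⁻¹ * pr S.p S.Zsrc z else 0 := by
          refine Finset.sum_congr rfl fun r _ => ?_
          by_cases hcond : fx u r (fz u z) = a
          · rw [if_pos hcond, if_pos hcond, hrow]
          · rw [if_neg hcond, if_neg hcond]
        rw [step1, ← Finset.sum_filter, Finset.sum_const, nsmul_eq_mul]
        have hcard : (Finset.univ.filter
            (fun r : Fin L → 𝔽 => fx u r (fz u z) = a)).card ≤ 1 := by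
          refine Finset.card_le_one.mpr fun r1 h1 r2 h2 => ?_
          simp only [Finset.mem_filter] at h1 h2
          exact hinjz (h1.2.trans h2.2.symm)
        have hnn : 0 ≤ (Fintype.card (Fin L → 𝔽) : ℝ)⁻¹ * pr S.p S.Zsrc z := by
          have : (0:ℝ) ≤ (Fintype.card (Fin L → 𝔽) : ℝ)⁻¹ := by positivity
          exact mul_nonneg this h0.le
        calc ((Finset.univ.filter
              (fun r : Fin L → 𝔽 => fx u r (fz u z) = a)).card : ℝ)
              * ((Fintype.card (Fin L → 𝔽) : ℝ)⁻¹ * pr S.p S.Zsrc z)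
            ≤ 1 * ((Fintype.card (Fin L → 𝔽) : ℝ)⁻¹ * pr S.p S.Zsrc z) := by
              refine mul_le_mul_of_nonneg_right ?_ hnn
              exact_mod_cast hcard
          _ = (Fintype.card (Fin L → 𝔽) : ℝ)⁻¹ * pr S.p S.Zsrc z := one_mul _
    refine le_trans (Finset.sum_le_sum keyz) ?_
    rw [← Finset.mul_sum, sum_pr S.Zsrc, S.p_sum_one, mul_one]
  -- conclusion
  have hqLcard : Fintype.card (Fin L → 𝔽) = Fintype.card 𝔽 ^ L := by
    rw [Fintype.card_fun, Fintype.card_fin]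
  constructor
  · have hH := le_H_of_bound hp S.p_sum_one
        (c := (Fintype.card (Fin L → 𝔽) : ℝ)) (Nat.cast_pos.mpr hqLpos) hXu
    calc (L : ℝ) * Real.log (Fintype.card 𝔽)
        = Real.log ((Fintype.card (Fin L → 𝔽) : ℝ)) := by
          rw [hqLcard]; push_cast; rw [Real.log_pow]
      _ ≤ H S.p (S.X u) := hH
  · obtain ⟨ω₀, hω₀⟩ : ∃ ω, 0 < S.p ω := by
      by_contra hcon; push_neg at hcon
      have h0 : ∑ ω, S.p ω = 0 :=
        Finset.sum_eq_zero fun ω _ => le_antisymm (hcon ω) (hp ω)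
      rw [S.p_sum_one] at h0; norm_num at h0
    have hzpos : 0 < pr S.p S.Zsrc (S.Zsrc ω₀) :=
      lt_of_lt_of_le hω₀ (single_le_pr hp rfl)
    have hcard := Fintype.card_le_of_injective _ (hinj _ hzpos)
    rw [hqLcard, Fintype.card_fun, Fintype.card_fin] at hcard
    exact (Nat.pow_le_pow_iff_right Fintype.one_lt_card).mp hcard


end SecAgg
end

section
/- Let 𝔽 be a finite field with q elements and let W be a random variable uniformly distributed on the K×L matrices over 𝔽. Then for any matrices F ∈ 𝔽^{M×K} and G ∈ 𝔽^{N×K}, the mutual information between the two linear images satisfies I[F·W : G·W] = (rank(F) + rank(G) − rank([F; G])) · L · log q, where [F; G] denotes the row stack of F and G. -/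
/-!
Shannon entropy machinery for finitely-supported random variables on a finite
probability space, and the definition of a vector-linear secure aggregation
scheme (Yuan–Sun, "Vector Linear Secure Aggregation").
-/

open scoped BigOperators Classical

namespace SecAgg

noncomputable section Aux

variable {Ω : Type*} [Fintype Ω]

lemma pr_comp {α β : Type*} [Fintype α] (p : Ω → ℝ) (W : Ω → α) (f : α → β) (b : β)
    (s : Finset α) (hs : ∀ w, w ∈ s ↔ f w = b) :
    pr p (fun ω => f (W ω)) b = ∑ w ∈ s, pr p W w := by
  unfold pr
  rw [eq_comm, Finset.sum_comm]
  refine Finset.sum_congr rfl fun ω _ => ?_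
  rw [Finset.sum_ite_eq]
  by_cases h : f (W ω) = b
  · rw [if_pos ((hs _).mpr h), if_pos h]
  · rw [if_neg (fun hmem => h ((hs _).mp hmem)), if_neg h]

lemma H_comp_inj {α β : Type*} (p : Ω → ℝ) (X : Ω → α) (g : α → β)
    (hg : Function.Injective g) :
    H p (fun ω => g (X ω)) = H p X := by
  unfold H
  have himg : Finset.univ.image (fun ω => g (X ω)) = (Finset.univ.image X).image g := by
    rw [Finset.image_image]; rfl
  rw [himg, Finset.sum_image (fun a _ b _ h => hg h)]
  refine Finset.sum_congr rfl fun a _ => ?_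
  congr 1
  unfold pr
  refine Finset.sum_congr rfl fun ω _ => ?_
  simp [hg.eq_iff]

lemma H_uniform {α : Type*} (p : Ω → ℝ) (X : Ω → α) (S : Finset α)
    (hS : Finset.univ.image X = S)
    (hne : S.Nonempty)
    (h : ∀ a ∈ S, pr p X a = ((S.card : ℝ))⁻¹) :
    H p X = Real.log S.card := by
  have hn : ((S.card : ℝ)) ≠ 0 := by
    exact_mod_cast Finset.card_ne_zero_of_mem hne.choose_spec
  unfold H
  rw [hS, Finset.sum_congr rfl (fun a ha => by rw [h a ha]), Finset.sum_const, nsmul_eq_mul]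
  rw [Real.negMulLog, Real.log_inv]
  field_simp

/-- Entropy of `A * W` for `W` uniform on matrices. -/
lemma H_mul_matrix {𝔽 : Type} [Field 𝔽] [Fintype 𝔽] {K L : ℕ}
    {m : Type} [Fintype m]
    (p : Ω → ℝ)
    (W : Ω → Matrix (Fin K) (Fin L) 𝔽)
    (hW : ∀ w : Matrix (Fin K) (Fin L) 𝔽,
      pr p W w = (Fintype.card (Matrix (Fin K) (Fin L) 𝔽) : ℝ)⁻¹)
    (A : Matrix m (Fin K) 𝔽) :
    H p (fun ω => A * W ω) = (A.rank * L : ℕ) * Real.log (Fintype.card 𝔽) := by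
  -- every matrix value is attained by W
  have hsurj : ∀ w : Matrix (Fin K) (Fin L) 𝔽, ∃ ω, W ω = w := by
    intro w
    by_contra h
    push_neg at h
    have h0 : pr p W w = 0 := by
      unfold pr; exact Finset.sum_eq_zero fun ω _ => if_neg (h ω)
    rw [hW] at h0
    have : (Fintype.card (Matrix (Fin K) (Fin L) 𝔽) : ℝ) ≠ 0 := by positivity
    exact (inv_ne_zero this) h0
  -- the image over Ω equals the image over all matrices
  have himg : Finset.univ.image (fun ω => A * W ω)
      = Finset.univ.image (fun w : Matrix (Fin K) (Fin L) 𝔽 => A * w) := by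
    ext b
    simp only [Finset.mem_image, Finset.mem_univ, true_and]
    constructor
    · rintro ⟨ω, rfl⟩; exact ⟨W ω, rfl⟩
    · rintro ⟨w, rfl⟩; obtain ⟨ω, rfl⟩ := hsurj w; exact ⟨ω, rfl⟩
  set S : Finset (Matrix m (Fin L) 𝔽) := Finset.univ.image (fun w : Matrix (Fin K) (Fin L) 𝔽 => A * w)
    with hS
  -- all fibers have the same cardinality
  have hfiber : ∀ w₀ : Matrix (Fin K) (Fin L) 𝔽,
      (Finset.univ.filter (fun w : Matrix (Fin K) (Fin L) 𝔽 => A * w = A * w₀)).card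
        = (Finset.univ.filter (fun w : Matrix (Fin K) (Fin L) 𝔽 => A * w = 0)).card := by
    intro w₀
    refine Finset.card_bij' (fun w _ => w - w₀) (fun w _ => w + w₀) ?_ ?_ ?_ ?_
    · intro w hw
      simp only [Finset.mem_filter, Finset.mem_univ, true_and] at hw ⊢
      rw [Matrix.mul_sub, hw, sub_self]
    · intro w hw
      simp only [Finset.mem_filter, Finset.mem_univ, true_and] at hw ⊢
      rw [Matrix.mul_add, hw, zero_add]
    · intro w _; simp
    · intro w _; simp
  set c : ℕ := (Finset.univ.filter (fun w : Matrix (Fin K) (Fin L) 𝔽 => A * w = 0)).card with hc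
  -- counting: |S| * c = |α|
  have hcount : S.card * c = Fintype.card (Matrix (Fin K) (Fin L) 𝔽) := by
    rw [← Finset.card_univ (α := Matrix (Fin K) (Fin L) 𝔽),
      Finset.card_eq_sum_card_fiberwise
        (f := fun w : Matrix (Fin K) (Fin L) 𝔽 => A * w) (t := S)
        (fun w _ => Finset.mem_image_of_mem _ (Finset.mem_univ w))]
    rw [Finset.sum_congr rfl (fun b hb => ?_), Finset.sum_const, smul_eq_mul]
    obtain ⟨w₀, _, rfl⟩ := Finset.mem_image.mp hb
    exact hfiber w₀
  have hSne : S.Nonempty := ⟨A * 0, Finset.mem_image_of_mem _ (Finset.mem_univ 0)⟩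
  have hScard0 : (S.card : ℝ) ≠ 0 := by
    exact_mod_cast Finset.card_ne_zero_of_mem hSne.choose_spec
  -- the pushforward is uniform on S
  have hpr : ∀ b ∈ S, pr p (fun ω => A * W ω) b = ((S.card : ℝ))⁻¹ := by
    intro b hb
    obtain ⟨w₀, _, rfl⟩ := Finset.mem_image.mp hb
    have h1 : pr p (fun ω => A * W ω) (A * w₀)
        = ∑ w ∈ Finset.univ.filter (fun w => A * w = A * w₀), pr p W w :=
      pr_comp p W (fun w => A * w) (A * w₀) _ (fun w => by simp)
    rw [h1, Finset.sum_congr rfl (fun w _ => hW w), Finset.sum_const, nsmul_eq_mul]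
    rw [hfiber w₀]
    have hcert : (S.card : ℝ) * (c : ℝ) = (Fintype.card (Matrix (Fin K) (Fin L) 𝔽) : ℝ) := by
      exact_mod_cast hcount
    have hcα' : (Fintype.card (Matrix (Fin K) (Fin L) 𝔽) : ℝ) ≠ 0 := by positivity
    field_simp
    linarith [hcert]
  -- entropy = log |S|
  have hH : H p (fun ω => A * W ω) = Real.log S.card := by
    refine H_uniform p (fun ω => A * W ω) S ?_ hSne hpr
    ext b
    simp only [Finset.mem_image, Finset.mem_univ, true_and, hS]
    constructor
    · rintro ⟨ω, rfl⟩; exact ⟨W ω, rfl⟩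
    · rintro ⟨w, rfl⟩; obtain ⟨ω, rfl⟩ := hsurj w; exact ⟨ω, rfl⟩
  -- |S| = (card of range of mulVec) ^ L
  set T : Finset (m → 𝔽) := Finset.univ.image A.mulVec with hT
  have hcardS : S.card = T.card ^ L := by
    rw [← Fintype.card_piFinset_const T L]
    refine Finset.card_bij' (fun C _ => fun j i => C i j)
      (fun u _ => Matrix.of fun i j => u j i) ?_ ?_ ?_ ?_
    · intro C hC
      obtain ⟨w, _, rfl⟩ := Finset.mem_image.mp hC
      rw [Fintype.mem_piFinset]
      intro j
      refine Finset.mem_image.mpr ⟨fun k => w k j, Finset.mem_univ _, ?_⟩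
      funext i
      simp [Matrix.mulVec, Matrix.mul_apply, dotProduct]
    · intro u hu
      rw [Fintype.mem_piFinset] at hu
      have hv : ∀ j, ∃ v : Fin K → 𝔽, A.mulVec v = u j := by
        intro j
        obtain ⟨v, _, hv⟩ := Finset.mem_image.mp (hu j)
        exact ⟨v, hv⟩
      choose v hv using hv
      refine Finset.mem_image.mpr ⟨Matrix.of fun k j => v j k, Finset.mem_univ _, ?_⟩
      ext i j
      have := congrFun (hv j) i
      simpa [Matrix.mul_apply, Matrix.mulVec, dotProduct] using this
    · intro C _; ext i j; rfl
    · intro u _; rfl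
  -- |T| = q ^ rank A
  have hcardT : T.card = Fintype.card 𝔽 ^ A.rank := by
    have h1 : T = (Set.range A.mulVec).toFinset := by
      rw [Set.toFinset_range]
    rw [h1, Set.toFinset_card]
    have h2 : Set.range A.mulVec = (LinearMap.range A.mulVecLin : Set (m → 𝔽)) := by
      ext x
      simp [Matrix.mulVecLin, LinearMap.mem_range]
    rw [Matrix.rank]
    have := Module.card_eq_pow_finrank (K := 𝔽) (V := LinearMap.range A.mulVecLin)
    rw [← this]
    exact Fintype.card_congr (Equiv.setCongr h2)
  rw [hH, hcardS, hcardT, ← pow_mul, Nat.cast_pow, Real.log_pow]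

end Aux

/-- If `W` is uniform on `K × L` matrices over a finite field `𝔽` with `q`
elements, then `I[F·W : G·W] = (rank F + rank G − rank [F; G]) · L · log q`. -/
theorem mutual_info_linear_images
    {𝔽 : Type} [Field 𝔽] [Fintype 𝔽] {K L M N : ℕ}
    (Ω : Type) [Fintype Ω] (p : Ω → ℝ)
    (hp0 : ∀ ω, 0 ≤ p ω) (hp1 : ∑ ω, p ω = 1)
    (W : Ω → Matrix (Fin K) (Fin L) 𝔽)
    (hW : ∀ w : Matrix (Fin K) (Fin L) 𝔽,
      pr p W w = (Fintype.card (Matrix (Fin K) (Fin L) 𝔽) : ℝ)⁻¹)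
    (F : Matrix (Fin M) (Fin K) 𝔽) (G : Matrix (Fin N) (Fin K) 𝔽) :
    MI p (fun ω => F * W ω) (fun ω => G * W ω)
      = ((F.rank : ℝ) + (G.rank : ℝ) - ((Matrix.fromRows F G).rank : ℝ)) * L
          * Real.log (Fintype.card 𝔽) := by
  have hF := H_mul_matrix p W hW F
  have hG := H_mul_matrix p W hW G
  have hFG := H_mul_matrix p W hW (Matrix.fromRows F G)
  have hjoint : H p (fun ω => (F * W ω, G * W ω))
      = H p (fun ω => Matrix.fromRows F G * W ω) := by
    have hg : Function.Injective
        (fun C : Matrix (Fin M ⊕ Fin N) (Fin L) 𝔽 => (Matrix.toRows₁ C, Matrix.toRows₂ C)) := by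
      intro C D h
      have h1 : Matrix.toRows₁ C = Matrix.toRows₁ D := congrArg Prod.fst h
      have h2 : Matrix.toRows₂ C = Matrix.toRows₂ D := congrArg Prod.snd h
      rw [← Matrix.fromRows_toRows C, ← Matrix.fromRows_toRows D, h1, h2]
    have heq : (fun ω => (F * W ω, G * W ω))
        = fun ω => (fun C : Matrix (Fin M ⊕ Fin N) (Fin L) 𝔽 =>
            (Matrix.toRows₁ C, Matrix.toRows₂ C)) (Matrix.fromRows F G * W ω) := by
      funext ω
      simp [Matrix.fromRows_mul, Matrix.toRows₁_fromRows, Matrix.toRows₂_fromRows]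
    rw [heq]
    exact H_comp_inj p (fun ω => Matrix.fromRows F G * W ω) _ hg
  unfold MI
  rw [hF, hG, hjoint, hFG]
  push_cast
  ring

end SecAgg
end
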